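/- arXiv:2208.07559 — 2 statements merged into one kernel-verified Lean document; each statement's English description precedes it below -/
import Mathlib

section
/- For the graph SEIR system with nonnegative initial data summing componentwise to 1, each component r_j(t) is monotone nondecreasing in t, each s_j(t) is monotone nonincreasing in t, and moreover i_j(t)+r_j(t) is monotone nondecreasing while s_j(t)+e_j(t) is monotone nonincreasing; consequently every trajectory converges as t → ∞ to an equilibrium point of the form (s_∞, 0, 0, r_∞) with Σ_j s_{∞,j} + Σ_j r_{∞,j} = n. -/
/-!
Node `j` is a single SEIR compartment driven by the force of infection `∑ₖ aⱼₖ iₖ`, and the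
coupling between nodes matters only through the sign of that force, which is nonnegative.
Within a node the flow `s → e → i → r` runs one way: `ṙ = γ i ≥ 0`, `ṡ ≤ 0`,
`(i + r)' = μ e ≥ 0` and `(s + e)' = -μ e ≤ 0`. Being monotone and bounded, `s`, `r`, `s + e`
and `i + r` converge, hence so do `e` and `i`. A convergent function whose derivative converges
has derivative tending to `0`: applied to `r` this gives `γ i → 0`, then applied to `i` it gives
`μ e → 0`. Passing to the limit in `s + e + i + r = 1` gives `slimⱼ + rlimⱼ = 1`.
-/

open Set Filter Topology

section Monotonicity

variable {f f' : ℝ → ℝ} {a : ℝ}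

theorem monotoneOn_Ici_of_hasDerivAt_nonneg (hf : ∀ t ∈ Ici a, HasDerivAt f (f' t) t)
    (hf' : ∀ t ∈ Ici a, 0 ≤ f' t) : MonotoneOn f (Ici a) :=
  monotoneOn_of_hasDerivWithinAt_nonneg (convex_Ici a)
    (fun t ht => (hf t ht).continuousAt.continuousWithinAt)
    (fun t ht => (hf t (interior_subset ht)).hasDerivWithinAt)
    (fun t ht => hf' t (interior_subset ht))

theorem antitoneOn_Ici_of_hasDerivAt_nonpos (hf : ∀ t ∈ Ici a, HasDerivAt f (f' t) t)
    (hf' : ∀ t ∈ Ici a, f' t ≤ 0) : AntitoneOn f (Ici a) :=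
  antitoneOn_of_hasDerivWithinAt_nonpos (convex_Ici a)
    (fun t ht => (hf t ht).continuousAt.continuousWithinAt)
    (fun t ht => (hf t (interior_subset ht)).hasDerivWithinAt)
    (fun t ht => hf' t (interior_subset ht))

theorem MonotoneOn.exists_tendsto_atTop (hf : MonotoneOn f (Ici a))
    (hb : BddAbove (f '' Ici a)) : ∃ L, Tendsto f atTop (𝓝 L) := by
  have hmono : Monotone fun t => f (max t a) := fun x y hxy =>
    hf (le_max_right x a) (le_max_right y a) (max_le_max hxy le_rfl)
  have hbdd : BddAbove (range fun t => f (max t a)) :=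
    hb.mono (range_subset_iff.2 fun t => mem_image_of_mem f (le_max_right t a))
  refine ⟨_, (tendsto_atTop_ciSup hmono hbdd).congr' ?_⟩
  filter_upwards [eventually_ge_atTop a] with t ht
  rw [max_eq_left ht]

theorem AntitoneOn.exists_tendsto_atTop (hf : AntitoneOn f (Ici a))
    (hb : BddBelow (f '' Ici a)) : ∃ L, Tendsto f atTop (𝓝 L) := by
  obtain ⟨C, hC⟩ := hb
  obtain ⟨L, hL⟩ := MonotoneOn.exists_tendsto_atTop (f := -f) (a := a)
    (fun x hx y hy hxy => neg_le_neg (hf hx hy hxy))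
    ⟨-C, forall_mem_image.2 fun t ht => neg_le_neg (hC (mem_image_of_mem f ht))⟩
  exact ⟨-L, by simpa using hL.neg⟩

end Monotonicity

theorem eq_zero_of_tendsto_of_hasDerivAt {f f' : ℝ → ℝ} {L c : ℝ}
    (hd : ∀ᶠ t in atTop, HasDerivAt f (f' t) t)
    (hf : Tendsto f atTop (𝓝 L)) (hf' : Tendsto f' atTop (𝓝 c)) : c = 0 := by
  obtain ⟨T, hT⟩ := eventually_atTop.1 hd
  have hslope (m : ℕ) : ∃ ξ ∈ Ioo (T + m) (T + m + 1), f' ξ = f (T + m + 1) - f (T + m) := by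
    have hT' : ∀ x ∈ Icc (T + m) (T + m + 1), HasDerivAt f (f' x) x := fun x hx =>
      hT x (by linarith [hx.1, m.cast_nonneg (α := ℝ)])
    obtain ⟨ξ, hξ, h⟩ := exists_hasDerivAt_eq_slope f f' (lt_add_one (T + m))
      (fun x hx => (hT' x hx).continuousAt.continuousWithinAt)
      (fun x hx => hT' x (Ioo_subset_Icc_self hx))
    exact ⟨ξ, hξ, by rw [h, add_sub_cancel_left, div_one]⟩
  choose ξ hξ hξ_eq using hslope
  have hgrid : Tendsto (fun m : ℕ => T + m) atTop atTop :=
    tendsto_atTop_add_const_left _ T tendsto_natCast_atTop_atTop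
  have hξ_top : Tendsto ξ atTop atTop := tendsto_atTop_mono (fun m => (hξ m).1.le) hgrid
  refine tendsto_nhds_unique (hf'.comp hξ_top) ?_
  have := (hf.comp (tendsto_atTop_add_const_right _ 1 hgrid)).sub (hf.comp hgrid)
  simpa only [sub_self, Function.comp_def, hξ_eq] using this

structure IsForcedSEIR (β μ γ : ℝ) (F s e i r : ℝ → ℝ) : Prop where
  hasDerivAt_s : ∀ t ≥ (0:ℝ), HasDerivAt s (-β * s t * F t) t
  hasDerivAt_e : ∀ t ≥ (0:ℝ), HasDerivAt e (β * s t * F t - μ * e t) t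
  hasDerivAt_i : ∀ t ≥ (0:ℝ), HasDerivAt i (μ * e t - γ * i t) t
  hasDerivAt_r : ∀ t ≥ (0:ℝ), HasDerivAt r (γ * i t) t
  force_nonneg : ∀ t ≥ (0:ℝ), 0 ≤ F t
  s_nonneg : ∀ t ≥ (0:ℝ), 0 ≤ s t
  e_nonneg : ∀ t ≥ (0:ℝ), 0 ≤ e t
  i_nonneg : ∀ t ≥ (0:ℝ), 0 ≤ i t
  sum_eq_one : ∀ t ≥ (0:ℝ), s t + e t + i t + r t = 1

namespace IsForcedSEIR

variable {β μ γ : ℝ} {F s e i r : ℝ → ℝ}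

theorem monotoneOn_r (h : IsForcedSEIR β μ γ F s e i r) (hγ : 0 ≤ γ) : MonotoneOn r (Ici 0) :=
  monotoneOn_Ici_of_hasDerivAt_nonneg h.hasDerivAt_r fun t ht => mul_nonneg hγ (h.i_nonneg t ht)

theorem antitoneOn_s (h : IsForcedSEIR β μ γ F s e i r) (hβ : 0 ≤ β) : AntitoneOn s (Ici 0) :=
  antitoneOn_Ici_of_hasDerivAt_nonpos h.hasDerivAt_s fun t ht => by
    have := mul_nonneg (mul_nonneg hβ (h.s_nonneg t ht)) (h.force_nonneg t ht)
    linarith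

theorem monotoneOn_i_add_r (h : IsForcedSEIR β μ γ F s e i r) (hμ : 0 ≤ μ) :
    MonotoneOn (fun t => i t + r t) (Ici 0) :=
  monotoneOn_Ici_of_hasDerivAt_nonneg (fun t ht => (h.hasDerivAt_i t ht).add (h.hasDerivAt_r t ht))
    fun t ht => by linarith [mul_nonneg hμ (h.e_nonneg t ht)]

theorem antitoneOn_s_add_e (h : IsForcedSEIR β μ γ F s e i r) (hμ : 0 ≤ μ) :
    AntitoneOn (fun t => s t + e t) (Ici 0) :=
  antitoneOn_Ici_of_hasDerivAt_nonpos (fun t ht => (h.hasDerivAt_s t ht).add (h.hasDerivAt_e t ht))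
    fun t ht => by linarith [mul_nonneg hμ (h.e_nonneg t ht)]

theorem i_add_r_le_one (h : IsForcedSEIR β μ γ F s e i r) {t : ℝ} (ht : 0 ≤ t) : i t + r t ≤ 1 := by
  linarith [h.sum_eq_one t ht, h.s_nonneg t ht, h.e_nonneg t ht]

theorem exists_tendsto_r (h : IsForcedSEIR β μ γ F s e i r) (hγ : 0 ≤ γ) :
    ∃ rlim, Tendsto r atTop (𝓝 rlim) :=
  (h.monotoneOn_r hγ).exists_tendsto_atTop
    ⟨1, forall_mem_image.2 fun t ht => by linarith [h.i_add_r_le_one ht, h.i_nonneg t ht]⟩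

theorem exists_tendsto_s (h : IsForcedSEIR β μ γ F s e i r) (hβ : 0 ≤ β) :
    ∃ slim, Tendsto s atTop (𝓝 slim) :=
  (h.antitoneOn_s hβ).exists_tendsto_atTop ⟨0, forall_mem_image.2 h.s_nonneg⟩

theorem tendsto_i (h : IsForcedSEIR β μ γ F s e i r) (hμ : 0 ≤ μ) (hγ : 0 < γ) :
    Tendsto i atTop (𝓝 0) := by
  obtain ⟨rlim, hr⟩ := h.exists_tendsto_r hγ.le
  obtain ⟨w, hw⟩ := (h.monotoneOn_i_add_r hμ).exists_tendsto_atTop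
    ⟨1, forall_mem_image.2 fun t ht => h.i_add_r_le_one ht⟩
  have hi : Tendsto i atTop (𝓝 (w - rlim)) := by simpa using hw.sub hr
  have := eq_zero_of_tendsto_of_hasDerivAt (eventually_atTop.2 ⟨0, h.hasDerivAt_r⟩) hr
    (hi.const_mul γ)
  rwa [(mul_eq_zero.1 this).resolve_left hγ.ne'] at hi

theorem tendsto_e (h : IsForcedSEIR β μ γ F s e i r) (hβ : 0 ≤ β) (hμ : 0 < μ) (hγ : 0 < γ) :
    Tendsto e atTop (𝓝 0) := by
  obtain ⟨slim, hs⟩ := h.exists_tendsto_s hβ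
  obtain ⟨w, hw⟩ := (h.antitoneOn_s_add_e hμ.le).exists_tendsto_atTop
    ⟨0, forall_mem_image.2 fun t ht => add_nonneg (h.s_nonneg t ht) (h.e_nonneg t ht)⟩
  have he : Tendsto e atTop (𝓝 (w - slim)) := by simpa using hw.sub hs
  have hi := h.tendsto_i hμ.le hγ
  have := eq_zero_of_tendsto_of_hasDerivAt (eventually_atTop.2 ⟨0, h.hasDerivAt_i⟩) hi
    ((he.const_mul μ).sub (hi.const_mul γ))
  rw [mul_zero, sub_zero] at this
  rwa [(mul_eq_zero.1 this).resolve_left hμ.ne'] at he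

theorem exists_tendsto_s_r (h : IsForcedSEIR β μ γ F s e i r) (hβ : 0 ≤ β) (hμ : 0 < μ)
    (hγ : 0 < γ) :
    ∃ slim rlim, Tendsto s atTop (𝓝 slim) ∧ Tendsto r atTop (𝓝 rlim) ∧ slim + rlim = 1 := by
  obtain ⟨slim, hs⟩ := h.exists_tendsto_s hβ
  obtain ⟨rlim, hr⟩ := h.exists_tendsto_r hγ.le
  have hsum := ((hs.add (h.tendsto_e hβ hμ hγ)).add (h.tendsto_i hμ.le hγ)).add hr
  rw [add_zero, add_zero] at hsum
  exact ⟨slim, rlim, hs, hr,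
    tendsto_nhds_unique (hsum.congr' (eventually_atTop.2 ⟨0, h.sum_eq_one⟩)) tendsto_const_nhds⟩

end IsForcedSEIR

/-- Monotonicity of the components of the graph SEIR system and convergence of
every trajectory to an equilibrium of the form (slim, 0, 0, rlim). -/
theorem stmt_2 (n : ℕ) (a : Fin n → Fin n → ℝ) (ha : ∀ j k, 0 ≤ a j k)
    (β μ γ : ℝ) (hβ : 0 < β) (hμ : 0 < μ) (hγ : 0 < γ)
    (s e i r : ℝ → Fin n → ℝ)
    (hode : ∀ t ≥ (0:ℝ), ∀ j,
      HasDerivAt (fun t => s t j) (-β * s t j * ∑ k, a j k * i t k) t ∧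
      HasDerivAt (fun t => e t j) (β * s t j * (∑ k, a j k * i t k) - μ * e t j) t ∧
      HasDerivAt (fun t => i t j) (μ * e t j - γ * i t j) t ∧
      HasDerivAt (fun t => r t j) (γ * i t j) t)
    (hbnd : ∀ t ≥ (0:ℝ), ∀ j,
      s t j ∈ Set.Icc (0:ℝ) 1 ∧ e t j ∈ Set.Icc (0:ℝ) 1 ∧
      i t j ∈ Set.Icc (0:ℝ) 1 ∧ r t j ∈ Set.Icc (0:ℝ) 1)
    (hsum : ∀ t ≥ (0:ℝ), ∀ j, s t j + e t j + i t j + r t j = 1) :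
    (∀ j, MonotoneOn (fun t => r t j) (Set.Ici (0:ℝ))) ∧
    (∀ j, AntitoneOn (fun t => s t j) (Set.Ici (0:ℝ))) ∧
    (∀ j, MonotoneOn (fun t => i t j + r t j) (Set.Ici (0:ℝ))) ∧
    (∀ j, AntitoneOn (fun t => s t j + e t j) (Set.Ici (0:ℝ))) ∧
    (∃ slim rlim : Fin n → ℝ,
      (∀ j, Filter.Tendsto (fun t => s t j) Filter.atTop (nhds (slim j))) ∧
      (∀ j, Filter.Tendsto (fun t => e t j) Filter.atTop (nhds 0)) ∧
      (∀ j, Filter.Tendsto (fun t => i t j) Filter.atTop (nhds 0)) ∧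
      (∀ j, Filter.Tendsto (fun t => r t j) Filter.atTop (nhds (rlim j))) ∧
      (∑ j, slim j) + (∑ j, rlim j) = n) := by
  have node (j : Fin n) : IsForcedSEIR β μ γ (fun t => ∑ k, a j k * i t k)
      (fun t => s t j) (fun t => e t j) (fun t => i t j) (fun t => r t j) :=
    { hasDerivAt_s := fun t ht => (hode t ht j).1
      hasDerivAt_e := fun t ht => (hode t ht j).2.1
      hasDerivAt_i := fun t ht => (hode t ht j).2.2.1
      hasDerivAt_r := fun t ht => (hode t ht j).2.2.2
      force_nonneg := fun t ht =>
        Finset.sum_nonneg fun k _ => mul_nonneg (ha j k) (hbnd t ht k).2.2.1.1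
      s_nonneg := fun t ht => (hbnd t ht j).1.1
      e_nonneg := fun t ht => (hbnd t ht j).2.1.1
      i_nonneg := fun t ht => (hbnd t ht j).2.2.1.1
      sum_eq_one := fun t ht => hsum t ht j }
  refine ⟨fun j => (node j).monotoneOn_r hγ.le, fun j => (node j).antitoneOn_s hβ.le,
    fun j => (node j).monotoneOn_i_add_r hμ.le, fun j => (node j).antitoneOn_s_add_e hμ.le, ?_⟩
  choose slim rlim hs hr hsr using fun j => (node j).exists_tendsto_s_r hβ.le hμ hγ
  refine ⟨slim, rlim, hs, fun j => (node j).tendsto_e hβ.le hμ hγ,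
    fun j => (node j).tendsto_i hμ.le hγ, hr, ?_⟩
  simp [← Finset.sum_add_distrib, hsr]
end

section
/- Consider the graph SEIR system and let B(t) = Diag(s(t)) A be irreducible and nonnegative with Perron eigenvalue λ_M(t) and positive left Perron eigenvector V_M(t). If for some τ ≥ 0 one has β λ_M(τ) ≤ γ, then the function q_τ(t) = V_M(τ)ᵀ (e(t) + i(t)) is monotone nonincreasing on [τ, ∞) and converges to 0 as t → ∞. -/
/-!
Along the trajectory `s` only decreases, so `Diag (s t) A ≤ Diag (s τ) A` entrywise for `t ≥ τ`,
and the left Perron vector `V` of `Diag (s τ) A` gives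
`q' = V ⬝ (β Diag (s t) A i - γ i) ≤ (β λ_M(τ) - γ) V ⬝ i ≤ 0`.
For the limit, each `x = i_j` (resp. `e_j`) is a compartment with `x' = inflow - c x`, inflow
`≥ 0`, whose outflow `c x` is the derivative of the function `r_j` (resp. `-(s_j + e_j)`), which is
bounded above. As `0 ≤ x ≤ 1` forces `x' ≥ -c`, Barbalat's lemma gives `x → 0`.
-/

open Filter Topology Set Finset

lemma mul_sub_le_sub_of_hasDerivAt {f f' : ℝ → ℝ} {x y C : ℝ} (hxy : x ≤ y)
    (hf : ∀ t ∈ Icc x y, HasDerivAt f (f' t) t) (hC : ∀ t ∈ Icc x y, C ≤ f' t) :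
    C * (y - x) ≤ f y - f x := by
  refine (convex_Icc x y).mul_sub_le_image_sub_of_le_deriv
    (fun t ht => (hf t ht).continuousAt.continuousWithinAt) (fun t ht => ?_) (fun t ht => ?_)
    x (left_mem_Icc.2 hxy) y (right_mem_Icc.2 hxy) hxy
  · exact (hf t (interior_subset ht)).differentiableAt.differentiableWithinAt
  · rw [(hf t (interior_subset ht)).deriv]
    exact hC t (interior_subset ht)

lemma MonotoneOn.exists_tendsto_atTop_of_Ici {α : Type*} [ConditionallyCompleteLinearOrder α]
    [TopologicalSpace α] [OrderTopology α] {F : ℝ → α} {a : ℝ} {M : α}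
    (hF : MonotoneOn F (Ici a)) (hM : ∀ t ≥ a, F t ≤ M) :
    ∃ L, Tendsto F atTop (𝓝 L) ∧ ∀ t ≥ a, F t ≤ L := by
  set G : ℝ → α := fun t => F (max a t)
  have hG : Monotone G := fun x y hxy =>
    hF (le_max_left a x) (le_max_left a y) (max_le_max le_rfl hxy)
  have hGF : G =ᶠ[atTop] F := by
    filter_upwards [eventually_ge_atTop a] with t ht
    simp only [G, max_eq_right ht]
  have hGL := tendsto_atTop_ciSup hG ⟨M, by rintro _ ⟨t, rfl⟩; exact hM _ (le_max_left a t)⟩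
  refine ⟨_, hGL.congr' hGF, fun t ht => ?_⟩
  simpa only [G, max_eq_right ht] using hG.ge_of_tendsto hGL t

/-- Barbalat's lemma. -/
lemma tendsto_atTop_zero_of_bddAbove_antideriv {F f f' : ℝ → ℝ} {a K M : ℝ} (hK : 0 < K)
    (hF : ∀ t ≥ a, HasDerivAt F (f t) t) (hf : ∀ t ≥ a, HasDerivAt f (f' t) t)
    (hf₀ : ∀ t ≥ a, 0 ≤ f t) (hFM : ∀ t ≥ a, F t ≤ M) (hf' : ∀ t ≥ a, -K ≤ f' t) :
    Tendsto f atTop (𝓝 0) := by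
  have hFmono : MonotoneOn F (Ici a) := fun x hx y _ hxy => by
    have := mul_sub_le_sub_of_hasDerivAt hxy (fun t ht => hF t (hx.trans ht.1))
      (fun t ht => hf₀ t (hx.trans ht.1)) (C := 0)
    linarith
  obtain ⟨L, hFL, hFleL⟩ := hFmono.exists_tendsto_atTop_of_Ici hFM
  -- On `[t, t + δ]` with `δ = f t / (2K)` we have `f ≥ f t / 2`, so `F` gains `f t ^ 2 / (4K)`.
  have hsq : ∀ t ≥ a, f t ^ 2 ≤ 4 * K * (L - F t) := by
    intro t ht
    set δ := f t / (2 * K)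
    have hδ : 0 ≤ δ := div_nonneg (hf₀ t ht) (by positivity)
    have hhalf : ∀ u ∈ Icc t (t + δ), f t / 2 ≤ f u := by
      intro u hu
      have := mul_sub_le_sub_of_hasDerivAt hu.1 (fun v hv => hf v (ht.trans hv.1))
        (fun v hv => hf' v (ht.trans hv.1))
      have hKδ : K * δ = f t / 2 := by simp only [δ]; field_simp
      nlinarith [hu.2]
    have hgain := mul_sub_le_sub_of_hasDerivAt (le_add_of_nonneg_right hδ)
      (fun u hu => hF u (ht.trans hu.1)) hhalf
    have hδK : f t / 2 * (t + δ - t) * (4 * K) = f t ^ 2 := by simp only [δ]; field_simp; ring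
    nlinarith [hFleL (t + δ) (by linarith)]
  have hsq_tendsto : Tendsto (fun t => f t ^ 2) atTop (𝓝 0) := by
    refine tendsto_of_tendsto_of_tendsto_of_le_of_le' tendsto_const_nhds ?_
      (Eventually.of_forall fun t => sq_nonneg (f t)) ((eventually_ge_atTop a).mono hsq)
    simpa using ((tendsto_const_nhds (x := L)).sub hFL).const_mul (4 * K)
  refine (by simpa using hsq_tendsto.sqrt : Tendsto (fun t => √(f t ^ 2)) atTop (𝓝 0)).congr' ?_
  filter_upwards [eventually_ge_atTop a] with t ht
  exact Real.sqrt_sq (hf₀ t ht)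

lemma tendsto_atTop_zero_of_hasDerivAt_sub_mul {x y F : ℝ → ℝ} {a c M : ℝ} (hc : 0 < c)
    (hx : ∀ t ≥ a, HasDerivAt x (y t - c * x t) t) (hF : ∀ t ≥ a, HasDerivAt F (c * x t) t)
    (hy : ∀ t ≥ a, 0 ≤ y t) (hx₀ : ∀ t ≥ a, 0 ≤ x t) (hx₁ : ∀ t ≥ a, x t ≤ 1)
    (hFM : ∀ t ≥ a, F t ≤ M) :
    Tendsto x atTop (𝓝 0) :=
  tendsto_atTop_zero_of_bddAbove_antideriv (F := fun t => F t / c) (M := M / c) hc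
    (fun t ht => by simpa [mul_div_cancel_left₀ _ hc.ne'] using (hF t ht).div_const c) hx hx₀
    (fun t ht => div_le_div_of_nonneg_right (hFM t ht) hc.le)
    (fun t ht => by nlinarith [hy t ht, hx₁ t ht])

lemma sum_mul_mul_sum_le_of_left_eigenvector {ι : Type*} [Fintype ι] {A : ι → ι → ℝ}
    {s σ V x : ι → ℝ} {lam : ℝ} (hA : ∀ j k, 0 ≤ A j k) (hV : ∀ j, 0 ≤ V j)
    (hx : ∀ k, 0 ≤ x k) (hσ : ∀ j, σ j ≤ s j)
    (heig : ∀ k, ∑ j, V j * (s j * A j k) = lam * V k) :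
    ∑ j, V j * (σ j * ∑ k, A j k * x k) ≤ lam * ∑ k, V k * x k :=
  calc ∑ j, V j * (σ j * ∑ k, A j k * x k)
      ≤ ∑ j, V j * (s j * ∑ k, A j k * x k) := by
        gcongr with j
        · exact hV j
        · exact sum_nonneg fun k _ => mul_nonneg (hA j k) (hx k)
        · exact hσ j
    _ = ∑ k, (∑ j, V j * (s j * A j k)) * x k := by
        simp_rw [mul_sum, sum_mul]
        rw [sum_comm]
        simp only [mul_assoc]
    _ = lam * ∑ k, V k * x k := by
        simp_rw [heig, mul_sum, mul_assoc]

lemma sum_mul_sub_nonpos_of_left_eigenvector {ι : Type*} [Fintype ι] {A : ι → ι → ℝ}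
    {s σ V x : ι → ℝ} {lam β γ : ℝ} (hA : ∀ j k, 0 ≤ A j k) (hV : ∀ j, 0 ≤ V j)
    (hx : ∀ k, 0 ≤ x k) (hσ : ∀ j, σ j ≤ s j)
    (heig : ∀ k, ∑ j, V j * (s j * A j k) = lam * V k) (hβ : 0 ≤ β) (hlam : β * lam ≤ γ) :
    ∑ j, V j * (β * σ j * ∑ k, A j k * x k - γ * x j) ≤ 0 := by
  have hVx : 0 ≤ ∑ k, V k * x k := sum_nonneg fun k _ => mul_nonneg (hV k) (hx k)
  have hBx := sum_mul_mul_sum_le_of_left_eigenvector hA hV hx hσ heig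
  calc _ = β * ∑ j, V j * (σ j * ∑ k, A j k * x k) - γ * ∑ j, V j * x j := by
        rw [mul_sum, mul_sum, ← sum_sub_distrib]
        exact sum_congr rfl fun j _ => by ring
    _ ≤ β * (lam * ∑ k, V k * x k) - γ * ∑ j, V j * x j := by gcongr
    _ ≤ 0 := by nlinarith [mul_le_mul_of_nonneg_right hlam hVx]

theorem stmt_3_general (n : ℕ) (A : Fin n → Fin n → ℝ) (hA : ∀ j k, 0 ≤ A j k)
    (β μ γ : ℝ) (hβ : 0 < β) (hμ : 0 < μ) (hγ : 0 < γ)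
    (s e i r : ℝ → Fin n → ℝ)
    (hode : ∀ t ≥ (0:ℝ), ∀ j,
      HasDerivAt (fun t => s t j) (-β * s t j * ∑ k, A j k * i t k) t ∧
      HasDerivAt (fun t => e t j) (β * s t j * (∑ k, A j k * i t k) - μ * e t j) t ∧
      HasDerivAt (fun t => i t j) (μ * e t j - γ * i t j) t ∧
      HasDerivAt (fun t => r t j) (γ * i t j) t)
    (hbnd : ∀ t ≥ (0:ℝ), ∀ j,
      s t j ∈ Set.Icc (0:ℝ) 1 ∧ e t j ∈ Set.Icc (0:ℝ) 1 ∧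
      i t j ∈ Set.Icc (0:ℝ) 1 ∧ r t j ∈ Set.Icc (0:ℝ) 1)
    (hsmono : ∀ j, AntitoneOn (fun t => s t j) (Set.Ici (0:ℝ)))
    (τ : ℝ) (hτ : 0 ≤ τ)
    (lamM : ℝ) (V : Fin n → ℝ) (hV : ∀ j, 0 < V j)
    -- V is a positive left eigenvector of B(τ) = Diag(s(τ)) A for the
    -- Perron eigenvalue lamM :
    (heig : ∀ k, ∑ j, V j * (s τ j * A j k) = lamM * V k)
    (hcond : β * lamM ≤ γ) :
    AntitoneOn (fun t => ∑ j, V j * (e t j + i t j)) (Set.Ici τ) ∧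
    Filter.Tendsto (fun t => ∑ j, V j * (e t j + i t j))
      Filter.atTop (nhds 0) := by
  have hi₀ : ∀ t ≥ (0:ℝ), ∀ k, 0 ≤ i t k := fun t ht k => (hbnd t ht k).2.2.1.1
  have hq : ∀ t ≥ τ, HasDerivAt (fun t => ∑ j, V j * (e t j + i t j))
      (∑ j, V j * (β * s t j * ∑ k, A j k * i t k - γ * i t j)) t := fun t ht =>
    HasDerivAt.fun_sum fun j _ =>
      (((hode t (hτ.trans ht) j).2.1.fun_add (hode t (hτ.trans ht) j).2.2.1).const_mul
        (V j)).congr_deriv (by ring)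
  refine ⟨antitoneOn_of_hasDerivWithinAt_nonpos (convex_Ici τ)
    (fun t ht => (hq t ht).continuousAt.continuousWithinAt)
    (fun t ht => (hq t (interior_subset ht)).hasDerivWithinAt)
    (fun t ht => ?_), ?_⟩
  · have ht : τ ≤ t := interior_subset ht
    exact sum_mul_sub_nonpos_of_left_eigenvector hA (fun j => (hV j).le)
      (hi₀ t (hτ.trans ht)) (fun j => hsmono j hτ (hτ.trans ht) ht) heig hβ.le hcond
  have hi : ∀ j, Tendsto (fun t => i t j) atTop (𝓝 0) := fun j =>
    tendsto_atTop_zero_of_hasDerivAt_sub_mul hγ (fun t ht => (hode t ht j).2.2.1)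
      (fun t ht => (hode t ht j).2.2.2) (fun t ht => mul_nonneg hμ.le (hbnd t ht j).2.1.1)
      (fun t ht => hi₀ t ht j) (fun t ht => (hbnd t ht j).2.2.1.2)
      (fun t ht => (hbnd t ht j).2.2.2.2)
  have he : ∀ j, Tendsto (fun t => e t j) atTop (𝓝 0) := fun j =>
    tendsto_atTop_zero_of_hasDerivAt_sub_mul (F := fun t => -(s t j + e t j)) (M := 0) hμ
      (fun t ht => (hode t ht j).2.1)
      (fun t ht => ((hode t ht j).1.fun_add (hode t ht j).2.1).fun_neg.congr_deriv (by ring))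
      (fun t ht => mul_nonneg (mul_nonneg hβ.le (hbnd t ht j).1.1)
        (sum_nonneg fun k _ => mul_nonneg (hA j k) (hi₀ t ht k)))
      (fun t ht => (hbnd t ht j).2.1.1) (fun t ht => (hbnd t ht j).2.1.2)
      (fun t ht => by linarith [(hbnd t ht j).1.1, (hbnd t ht j).2.1.1])
  simpa using tendsto_finsetSum univ fun j _ => ((he j).add (hi j)).const_mul (V j)

/-- If β λ_M(τ) ≤ γ, then q_τ(t) = V_M(τ)ᵀ (e(t)+i(t)) is nonincreasing on [τ,∞)
and tends to 0. -/
theorem stmt_3 (n : ℕ) (A : Fin n → Fin n → ℝ) (hA : ∀ j k, 0 ≤ A j k)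
    (β μ γ : ℝ) (hβ : 0 < β) (hμ : 0 < μ) (hγ : 0 < γ)
    (s e i r : ℝ → Fin n → ℝ)
    (hode : ∀ t ≥ (0:ℝ), ∀ j,
      HasDerivAt (fun t => s t j) (-β * s t j * ∑ k, A j k * i t k) t ∧
      HasDerivAt (fun t => e t j) (β * s t j * (∑ k, A j k * i t k) - μ * e t j) t ∧
      HasDerivAt (fun t => i t j) (μ * e t j - γ * i t j) t ∧
      HasDerivAt (fun t => r t j) (γ * i t j) t)
    (hbnd : ∀ t ≥ (0:ℝ), ∀ j,
      s t j ∈ Set.Icc (0:ℝ) 1 ∧ e t j ∈ Set.Icc (0:ℝ) 1 ∧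
      i t j ∈ Set.Icc (0:ℝ) 1 ∧ r t j ∈ Set.Icc (0:ℝ) 1)
    (hsum : ∀ t ≥ (0:ℝ), ∀ j, s t j + e t j + i t j + r t j = 1)
    (hsmono : ∀ j, AntitoneOn (fun t => s t j) (Set.Ici (0:ℝ)))
    (τ : ℝ) (hτ : 0 ≤ τ)
    (lamM : ℝ) (V : Fin n → ℝ) (hV : ∀ j, 0 < V j)
    -- V is a positive left eigenvector of B(τ) = Diag(s(τ)) A for the
    -- Perron eigenvalue lamM :
    (heig : ∀ k, ∑ j, V j * (s τ j * A j k) = lamM * V k)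
    (hcond : β * lamM ≤ γ) :
    AntitoneOn (fun t => ∑ j, V j * (e t j + i t j)) (Set.Ici τ) ∧
    Filter.Tendsto (fun t => ∑ j, V j * (e t j + i t j))
      Filter.atTop (nhds 0) :=
  stmt_3_general n A hA β μ γ hβ hμ hγ s e i r hode hbnd hsmono τ hτ lamM V hV heig hcond
end
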